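/- For every finite DTMDP with uniformisation rate q > 0, time bound t ≥ 0 and reward structure (c, f), there exists a counting deterministic (CD) scheduler d such that for every initial state s0, V(d, s0) equals the supremum over all history-dependent randomised (HR) schedulers σ of V(σ, s0); in particular, the supremum over HR schedulers is attained by a CD scheduler. -/

import Mathlib

open scoped BigOperators

namespace TR

variable {S A : Type} [Fintype S] [Fintype A] [DecidableEq S] [DecidableEq A]

/-- Poisson probabilities `φ_λ(i) = λ^i/i! · e^{−λ}`. -/
noncomputable def phi (lam : ℝ) (i : ℕ) : ℝ :=
  lam ^ i / (Nat.factorial i : ℝ) * Real.exp (-lam)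

/-- `ψ_λ(i) = 1 − Σ_{j=0}^{i} φ_λ(j)`. -/
noncomputable def psi (lam : ℝ) (i : ℕ) : ℝ :=
  1 - ∑ j ∈ Finset.range (i + 1), phi lam j

/-- Action `a` is enabled in state `s`. -/
def Enabled (P : S → A → S → ℝ) (s : S) (a : A) : Prop :=
  ∑ s', P s a s' = 1

/-- `P` is the transition function of a finite DTMDP. -/
def IsDTMDP (P : S → A → S → ℝ) : Prop :=
  (∀ s a s', 0 ≤ P s a s') ∧
  (∀ s a, (∑ s', P s a s') = 0 ∨ (∑ s', P s a s') = 1) ∧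
  (∀ s, ∃ a, Enabled P s a)

/-- History-dependent randomised scheduler.  A history is encoded as a pair of
a list of (state, action) pairs (most recent first) and the current state. -/
def IsHR (P : S → A → S → ℝ) (sch : List (S × A) × S → A → ℝ) : Prop :=
  (∀ h a, 0 ≤ sch h a) ∧ (∀ h, ∑ a, sch h a = 1) ∧
  (∀ h a, 0 < sch h a → Enabled P h.2 a)

/-- Probability of the path recorded in the given history (of length `n`,
starting at `s0`) under the HR scheduler `sch`. -/
noncomputable def hrHistProb (P : S → A → S → ℝ) (sch : List (S × A) × S → A → ℝ)
    (s0 : S) : ℕ → List (S × A) × S → ℝ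
  | 0, h => if h.1 = [] ∧ h.2 = s0 then 1 else 0
  | _ + 1, ([], _) => 0
  | n + 1, ((s, a) :: rest, s') =>
      hrHistProb P sch s0 n (rest, s) * sch (rest, s) a * P s a s'

/-- Transient probability `tprob^σ(s0, n, s)`: total probability of all paths of
length `n` from `s0` ending in `s`. -/
noncomputable def hrProb (P : S → A → S → ℝ) (sch : List (S × A) × S → A → ℝ)
    (s0 : S) (n : ℕ) (s : S) : ℝ :=
  ∑' l : List (S × A), hrHistProb P sch s0 n (l, s)

/-- Counting randomised scheduler. -/
def IsCR (P : S → A → S → ℝ) (sch : S → ℕ → A → ℝ) : Prop :=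
  (∀ s n a, 0 ≤ sch s n a) ∧ (∀ s n, ∑ a, sch s n a = 1) ∧
  (∀ s n a, 0 < sch s n a → Enabled P s a)

/-- Transient distribution of a CR scheduler. -/
noncomputable def crProb (P : S → A → S → ℝ) (sch : S → ℕ → A → ℝ) (s0 : S) :
    ℕ → S → ℝ
  | 0 => fun s => if s = s0 then 1 else 0
  | n + 1 => fun s' => ∑ s, crProb P sch s0 n s * ∑ a, sch s n a * P s a s'

/-- Counting deterministic scheduler. -/
def IsCD (P : S → A → S → ℝ) (d : S → ℕ → A) : Prop :=
  ∀ s n, Enabled P s (d s n)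

/-- Transient distribution of a CD scheduler. -/
noncomputable def cdProb (P : S → A → S → ℝ) (d : S → ℕ → A) (s0 : S) :
    ℕ → S → ℝ
  | 0 => fun s => if s = s0 then 1 else 0
  | n + 1 => fun s' => ∑ s, cdProb P d s0 n s * P s (d s n) s'

/-- The value `V = Σ_i [ φ_{qt}(i)·Σ_s p_i(s)·f(s) + ψ_{qt}(i)·Σ_s p_i(s)·c(s)/q ]`
of transient distributions `p` w.r.t. uniformisation rate `q`, time bound `t`
and rewards `(c, f)`. -/
noncomputable def value (q t : ℝ) (c f : S → ℝ) (p : ℕ → S → ℝ) : ℝ :=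
  ∑' i : ℕ, (phi (q * t) i * ∑ s, p i s * f s
    + psi (q * t) i * ∑ s, p i s * (c s / q))

/-- Value-iteration vectors of a CR scheduler: `crVI … k j` is `q_{k+1-j}`,
i.e. `crVI … k 0 = q_{k+1} ≡ 0` and `crVI … k (k+1) = q_0`. -/
noncomputable def crVI (P : S → A → S → ℝ) (sch : S → ℕ → A → ℝ)
    (q t : ℝ) (c f : S → ℝ) (k : ℕ) : ℕ → S → ℝ
  | 0 => fun _ => 0
  | j + 1 => fun s =>
      (∑ a, sch s (k - j) a * ∑ s', P s a s' * crVI P sch q t c f k j s')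
      + phi (q * t) (k - j) * f s + psi (q * t) (k - j) * (c s / q)

/-- Maximising value-iteration vectors: `maxVI … k j` is `q'_{k+1-j}`,
i.e. `maxVI … k 0 = q'_{k+1} ≡ 0` and `maxVI … k (k+1) = q'_0`. -/
noncomputable def maxVI (P : S → A → S → ℝ)
    (q t : ℝ) (c f : S → ℝ) (k : ℕ) : ℕ → S → ℝ
  | 0 => fun _ => 0
  | j + 1 => fun s =>
      sSup {x : ℝ | ∃ a, Enabled P s a ∧
        x = ∑ s', P s a s' * maxVI P q t c f k j s'}
      + phi (q * t) (k - j) * f s + psi (q * t) (k - j) * (c s / q)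

/-- Maximum of a real-valued function on a finite nonempty type. -/
noncomputable def maxOf [Nonempty S] (g : S → ℝ) : ℝ :=
  Finset.univ.sup' Finset.univ_nonempty g

/-- `k` is `ε`-sufficient: `Σ_{n=0}^{k} ψ_{qt}(n) > qt − ε·q/(2·max_s c(s))`
(dropped if `max_s c(s) = 0`) and `ψ_{qt}(k)·max_s f(s) < ε/2`. -/
def EpsSufficient [Nonempty S] (q t : ℝ) (c f : S → ℝ) (ε : ℝ) (k : ℕ) : Prop :=
  (maxOf c = 0 ∨
    (∑ n ∈ Finset.range (k + 1), psi (q * t) n) > q * t - ε * q / (2 * maxOf c)) ∧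
  psi (q * t) k * maxOf f < ε / 2

/-- `n`-step transition probabilities (matrix powers) of a stochastic matrix. -/
noncomputable def matPow (P : S → S → ℝ) : ℕ → S → S → ℝ
  | 0 => fun s s' => if s = s' then 1 else 0
  | n + 1 => fun s s' => ∑ s'', matPow P n s s'' * P s'' s'

/-- `part` is a partition of the finite state set `S`. -/
def IsPartition (part : Finset (Finset S)) : Prop :=
  (∀ z ∈ part, z.Nonempty) ∧ (∀ s : S, ∃ z ∈ part, s ∈ z) ∧
  (∀ z ∈ part, ∀ z' ∈ part, z ≠ z' → Disjoint z z')

/-- Abstraction DTMDP of a stochastic matrix w.r.t. a partition: states are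
blocks, actions are concrete states, `P̄(z, s, z') = Σ_{s' ∈ z'} P(s,s')` if
`s ∈ z` and `0` otherwise. -/
noncomputable def abst (P : S → S → ℝ) (part : Finset (Finset S)) :
    {z // z ∈ part} → S → {z // z ∈ part} → ℝ :=
  fun z s z' => if s ∈ z.1 then ∑ s' ∈ z'.1, P s s' else 0

end TR

/-!
Let `U n s` be the optimal value from state `s` at time `n`, i.e. collecting `r (i + n)` at
step `i`. Unfolding one step of an HR scheduler leaves an HR scheduler, so
`U n s ≤ r n s + max_a Σ_{s'} P(s,a,s') U (n+1) s'`. A CD scheduler `d` choosing a maximiser at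
every `(s, n)` has values `W n` satisfying the same recursion with equality, so `U - W` is
subharmonic along `d`; as it is also bounded by the tails of the summable rewards, it is
nonpositive. The value `V` is the case of the stage rewards `φ_{qt}(i) f + ψ_{qt}(i) c / q`,
summable because `ψ_{qt}(i) ≤ (qt)^{i+1}/(i+1)!`.
-/

namespace TR

open Filter Topology

section Poisson

lemma phi_nonneg {lam : ℝ} (h : 0 ≤ lam) (i : ℕ) : 0 ≤ phi lam i := by
  unfold phi
  positivity

lemma summable_phi (lam : ℝ) : Summable (phi lam) :=
  (Real.summable_pow_div_factorial lam).mul_right _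

lemma tsum_phi (lam : ℝ) : ∑' i, phi lam i = 1 := by
  have hexp : ∑' i : ℕ, lam ^ i / (i.factorial : ℝ) = Real.exp lam := by
    rw [Real.exp_eq_exp_ℝ, NormedSpace.exp_eq_tsum_div]
  simp only [phi]
  rw [tsum_mul_right, hexp, Real.exp_neg, mul_inv_cancel₀ (Real.exp_ne_zero lam)]

lemma psi_eq_tsum (lam : ℝ) (n : ℕ) : psi lam n = ∑' i, phi lam (i + (n + 1)) := by
  have := (summable_phi lam).sum_add_tsum_nat_add (n + 1)
  rw [tsum_phi] at this
  rw [psi]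
  linarith

lemma psi_nonneg {lam : ℝ} (h : 0 ≤ lam) (n : ℕ) : 0 ≤ psi lam n := by
  rw [psi_eq_tsum]
  exact tsum_nonneg fun i => phi_nonneg h _

lemma phi_add_le {lam : ℝ} (h : 0 ≤ lam) (i m : ℕ) :
    phi lam (i + m) ≤ lam ^ m / (m.factorial : ℝ) * phi lam i := by
  have hfac : (i.factorial * m.factorial : ℝ) ≤ (i + m).factorial := by
    exact_mod_cast Nat.le_of_dvd (Nat.factorial_pos _)
      (Nat.factorial_mul_factorial_dvd_factorial_add i m)
  calc phi lam (i + m) = lam ^ (i + m) * Real.exp (-lam) / (i + m).factorial := by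
        rw [phi]; ring
    _ ≤ lam ^ (i + m) * Real.exp (-lam) / (i.factorial * m.factorial) := by
        gcongr
    _ = lam ^ m / (m.factorial : ℝ) * phi lam i := by
        rw [phi, pow_add]; ring

lemma psi_le_pow_div_factorial {lam : ℝ} (h : 0 ≤ lam) (n : ℕ) :
    psi lam n ≤ lam ^ (n + 1) / ((n + 1).factorial : ℝ) := by
  rw [psi_eq_tsum]
  calc ∑' i, phi lam (i + (n + 1))
      ≤ ∑' i, lam ^ (n + 1) / ((n + 1).factorial : ℝ) * phi lam i :=
        Summable.tsum_le_tsum (fun i => phi_add_le h i (n + 1))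
          ((summable_nat_add_iff (n + 1)).2 (summable_phi lam)) ((summable_phi lam).mul_left _)
    _ = lam ^ (n + 1) / ((n + 1).factorial : ℝ) := by
        rw [tsum_mul_left, tsum_phi, mul_one]

lemma summable_psi {lam : ℝ} (h : 0 ≤ lam) : Summable (psi lam) :=
  Summable.of_nonneg_of_le (psi_nonneg h) (psi_le_pow_div_factorial h)
    ((summable_nat_add_iff 1).2 (Real.summable_pow_div_factorial lam))

end Poisson

section Lists

variable {X : Type} [Fintype X]

lemma summable_of_length_ne {F : List X → ℝ} (n : ℕ) (h : ∀ l, l.length ≠ n → F l = 0) :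
    Summable F :=
  summable_of_hasFiniteSupport <|
    (List.finite_length_eq X n).subset fun l hl => by_contra fun hn => hl (h l hn)

lemma tsum_eq_sum_tsum_of_injective {β γ : Type} {g : X × β → γ} (hg : Function.Injective g)
    {F : γ → ℝ} (hF : Function.support F ⊆ Set.range g) (hsum : Summable F) :
    ∑' c, F c = ∑ x, ∑' b, F (g (x, b)) := by
  have hsum' : Summable fun p => F (g p) := hsum.comp_injective hg
  rw [← hg.tsum_eq hF, hsum'.tsum_prod' hsum'.prod_factor, tsum_fintype]

lemma tsum_list_eq_sum_tsum_cons {F : List X → ℝ} (h0 : F [] = 0) (hsum : Summable F) :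
    ∑' l, F l = ∑ x, ∑' l, F (x :: l) := by
  refine tsum_eq_sum_tsum_of_injective (g := fun p => p.1 :: p.2)
    (fun p p' h => by simpa [Prod.ext_iff] using h) (fun l hl => ?_) hsum
  cases l with
  | nil => exact absurd h0 hl
  | cons x l => exact ⟨(x, l), rfl⟩

lemma tsum_list_eq_sum_tsum_concat {F : List X → ℝ} (h0 : F [] = 0) (hsum : Summable F) :
    ∑' l, F l = ∑ x, ∑' l, F (l ++ [x]) := by
  refine tsum_eq_sum_tsum_of_injective (g := fun p => p.2 ++ [p.1])
    (fun p p' h => ?_) (fun l hl => ?_) hsum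
  · obtain ⟨h2, h1⟩ := List.append_inj' h rfl
    exact Prod.ext (List.singleton_inj.1 h1) h2
  · rcases List.eq_nil_or_concat l with rfl | ⟨l, x, rfl⟩
    · exact absurd h0 hl
    · exact ⟨(x, l), List.concat_eq_append.symm⟩

end Lists

section HRScheduler

variable {S A : Type} {P : S → A → S → ℝ} {σ : List (S × A) × S → A → ℝ} {s0 : S}

/-- Histories are stored most recent first, so the first step `(s0, a)` sits at the end. -/
def shiftSch (σ : List (S × A) × S → A → ℝ) (s0 : S) (a : A) : List (S × A) × S → A → ℝ :=
  fun h => σ (h.1 ++ [(s0, a)], h.2)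

lemma isHR_shiftSch [Fintype S] [Fintype A] (hσ : IsHR P σ) (a : A) :
    IsHR P (shiftSch σ s0 a) :=
  ⟨fun _ => hσ.1 _, fun _ => hσ.2.1 _, fun _ => hσ.2.2 _⟩

lemma IsHR.mul_sum_eq [Fintype S] [Fintype A] (hσ : IsHR P σ) (l : List (S × A)) (u : S)
    (a : A) : σ (l, u) a * ∑ s', P u a s' = σ (l, u) a := by
  rcases (hσ.1 (l, u) a).eq_or_lt with h0 | h0
  · rw [← h0, zero_mul]
  · rw [hσ.2.2 (l, u) a h0, mul_one]

variable [DecidableEq S]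

lemma hrHistProb_eq_zero_of_length_ne {n : ℕ} {l : List (S × A)} (s : S) (h : l.length ≠ n) :
    hrHistProb P σ s0 n (l, s) = 0 := by
  induction n generalizing l s with
  | zero =>
    cases l with
    | nil => exact absurd rfl h
    | cons => simp [hrHistProb]
  | succ n ih =>
    cases l with
    | nil => rfl
    | cons x l =>
      rw [hrHistProb, ih x.1 (by simpa using h), zero_mul, zero_mul]

lemma hrProb_zero (s : S) : hrProb P σ s0 0 s = if s = s0 then 1 else 0 := by
  rw [hrProb, tsum_eq_single []]
  · simp [hrHistProb]
  · intro l hl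
    simp [hrHistProb, hl]

variable [Fintype S]

lemma hrHistProb_concat (n : ℕ) (l : List (S × A)) (u : S) (a : A) (s : S) :
    hrHistProb P σ s0 (n + 1) (l ++ [(u, a)], s) =
      if u = s0 then
        σ ([], s0) a * ∑ s1, P s0 a s1 * hrHistProb P (shiftSch σ s0 a) s1 n (l, s)
      else 0 := by
  induction l generalizing n s with
  | nil =>
    cases n with
    | zero =>
      by_cases hu : u = s0
      · subst hu
        simp [hrHistProb, mul_comm]
      · simp [hrHistProb, hu]
    | succ n => simp [hrHistProb]
  | cons x l ih =>
    cases n with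
    | zero => simp [hrHistProb]
    | succ n =>
      rw [List.cons_append, hrHistProb, ih]
      split_ifs with hu
      · subst hu
        simp only [hrHistProb, shiftSch, Finset.mul_sum, Finset.sum_mul]
        exact Finset.sum_congr rfl fun _ _ => by ring
      · simp

variable [Fintype A]

lemma summable_hrHistProb (n : ℕ) (s : S) : Summable fun l => hrHistProb P σ s0 n (l, s) :=
  summable_of_length_ne n fun _ hl => hrHistProb_eq_zero_of_length_ne s hl

lemma hrHistProb_nonneg (hP : ∀ s a s', 0 ≤ P s a s') (hσ : IsHR P σ) (n : ℕ)
    (l : List (S × A)) (s : S) : 0 ≤ hrHistProb P σ s0 n (l, s) := by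
  induction n generalizing l s with
  | zero => rw [hrHistProb]; positivity
  | succ n ih =>
    cases l with
    | nil => exact le_rfl
    | cons x l => exact mul_nonneg (mul_nonneg (ih l x.1) (hσ.1 _ _)) (hP _ _ _)

lemma hrProb_nonneg (hP : ∀ s a s', 0 ≤ P s a s') (hσ : IsHR P σ) (n : ℕ) (s : S) :
    0 ≤ hrProb P σ s0 n s :=
  tsum_nonneg fun l => hrHistProb_nonneg hP hσ n l s

lemma hrProb_succ (n : ℕ) (s : S) :
    hrProb P σ s0 (n + 1) s =
      ∑ a, σ ([], s0) a * ∑ s1, P s0 a s1 * hrProb P (shiftSch σ s0 a) s1 n s := by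
  have hfirst : ∀ u a, ∑' l, hrHistProb P σ s0 (n + 1) (l ++ [(u, a)], s) =
      if u = s0 then
        σ ([], s0) a * ∑ s1, P s0 a s1 * hrProb P (shiftSch σ s0 a) s1 n s
      else 0 := by
    intro u a
    simp_rw [hrHistProb_concat]
    split_ifs
    · rw [tsum_mul_left, Summable.tsum_finsetSum fun s1 _ => (summable_hrHistProb n s).mul_left _]
      simp_rw [hrProb, ← tsum_mul_left]
    · exact tsum_zero
  rw [hrProb, tsum_list_eq_sum_tsum_concat rfl (summable_hrHistProb (n + 1) s),
    Fintype.sum_prod_type]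
  simp [hfirst]

lemma hrProb_succ_eq_sum_tsum_mul (n : ℕ) (s : S) :
    hrProb P σ s0 (n + 1) s =
      ∑ u, ∑' l, hrHistProb P σ s0 n (l, u) * ∑ a, σ (l, u) a * P u a s := by
  rw [hrProb, tsum_list_eq_sum_tsum_cons rfl (summable_hrHistProb (n + 1) s),
    Fintype.sum_prod_type]
  refine Finset.sum_congr rfl fun u _ => ?_
  rw [← Summable.tsum_finsetSum fun a _ => summable_of_length_ne n fun l hl => by
    rw [hrHistProb, hrHistProb_eq_zero_of_length_ne u hl, zero_mul, zero_mul]]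
  simp only [Finset.mul_sum]
  exact tsum_congr fun l => Finset.sum_congr rfl fun a _ => by rw [hrHistProb, mul_assoc]

lemma sum_hrProb_eq_one (hσ : IsHR P σ) (n : ℕ) : ∑ s, hrProb P σ s0 n s = 1 := by
  induction n generalizing σ s0 with
  | zero => simp [hrProb_zero]
  | succ n ih =>
    calc ∑ s, hrProb P σ s0 (n + 1) s
        = ∑ a, σ ([], s0) a * ∑ s1, P s0 a s1 * ∑ s, hrProb P (shiftSch σ s0 a) s1 n s := by
          simp only [hrProb_succ, Finset.mul_sum]
          rw [Finset.sum_comm]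
          exact Finset.sum_congr rfl fun a _ => Finset.sum_comm
      _ = 1 := by
          simp only [ih (isHR_shiftSch hσ _), mul_one, hσ.mul_sum_eq [] s0]
          exact hσ.2.1 _

lemma hrProb_le_one (hP : ∀ s a s', 0 ≤ P s a s') (hσ : IsHR P σ) (n : ℕ) (s : S) :
    hrProb P σ s0 n s ≤ 1 :=
  sum_hrProb_eq_one (s0 := s0) hσ n ▸
    Finset.single_le_sum (fun s _ => hrProb_nonneg hP hσ n s) (Finset.mem_univ s)

end HRScheduler

lemma nonpos_of_subharmonic_of_le_tendsto_zero {S : Type} [Fintype S] {K : ℕ → S → S → ℝ}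
    (hK0 : ∀ n s s', 0 ≤ K n s s') (hK1 : ∀ n s, ∑ s', K n s s' = 1) {D : ℕ → S → ℝ}
    (hD : ∀ n s, D n s ≤ ∑ s', K n s s' * D (n + 1) s') {T : ℕ → ℝ} (hDT : ∀ n s, D n s ≤ T n)
    (hT : Tendsto T atTop (𝓝 0)) (n : ℕ) (s : S) : D n s ≤ 0 := by
  have hk : ∀ k n s, D n s ≤ T (k + n) := by
    intro k
    induction k with
    | zero => simpa using hDT
    | succ k ih =>
      intro n s
      calc D n s ≤ ∑ s', K n s s' * D (n + 1) s' := hD n s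
        _ ≤ ∑ s', K n s s' * T (k + (n + 1)) :=
          Finset.sum_le_sum fun s' _ => mul_le_mul_of_nonneg_left (ih _ _) (hK0 _ _ _)
        _ = T (k + 1 + n) := by rw [← Finset.sum_mul, hK1, one_mul, add_right_comm, add_assoc]
  exact ge_of_tendsto' (hT.comp (tendsto_add_atTop_nat n)) fun k => hk k n s

section CDScheduler

variable {S A : Type} {P : S → A → S → ℝ}

/-- `d` with its clock started at `m`: the length of the history counts the steps since. -/
def cdSched [DecidableEq A] (d : S → ℕ → A) (m : ℕ) : List (S × A) × S → A → ℝ :=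
  fun h a => if a = d h.2 (m + h.1.length) then 1 else 0

lemma shiftSch_cdSched [DecidableEq A] (d : S → ℕ → A) (m : ℕ) (s : S) (a : A) :
    shiftSch (cdSched d m) s a = cdSched d (m + 1) := by
  funext h b
  simp only [shiftSch, cdSched, List.length_append, List.length_singleton]
  rw [add_comm h.1.length 1, add_assoc]

variable [Fintype S] [Fintype A]

lemma isHR_cdSched [DecidableEq A] {d : S → ℕ → A} (hd : IsCD P d) (m : ℕ) :
    IsHR P (cdSched d m) := by
  refine ⟨fun h a => ?_, fun h => by simp [cdSched], fun h a ha => ?_⟩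
  · unfold cdSched
    split_ifs <;> norm_num
  · unfold cdSched at ha
    split_ifs at ha with hda
    · exact hda ▸ hd _ _
    · exact absurd ha (lt_irrefl 0)

lemma hrProb_cdSched [DecidableEq S] [DecidableEq A] (d : S → ℕ → A) (s0 : S) :
    hrProb P (cdSched d 0) s0 = cdProb P d s0 := by
  funext n s
  induction n generalizing s with
  | zero => rw [hrProb_zero]; rfl
  | succ n ih =>
    rw [hrProb_succ_eq_sum_tsum_mul, cdProb]
    refine Finset.sum_congr rfl fun u _ => ?_
    have hstep : ∀ l, hrHistProb P (cdSched d 0) s0 n (l, u) *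
        ∑ a, cdSched d 0 (l, u) a * P u a s =
          hrHistProb P (cdSched d 0) s0 n (l, u) * P u (d u n) s := by
      intro l
      by_cases hl : l.length = n
      · simp [cdSched, hl]
      · simp [hrHistProb_eq_zero_of_length_ne u hl]
    rw [tsum_congr hstep, tsum_mul_right, ← ih]
    rfl

lemma exists_isCD_forall_le (hP : ∀ s, ∃ a, Enabled P s a) (U : ℕ → S → ℝ) :
    ∃ d : S → ℕ → A, IsCD P d ∧ ∀ s n b, Enabled P s b →
      ∑ s1, P s b s1 * U n s1 ≤ ∑ s1, P s (d s n) s1 * U n s1 := by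
  classical
  have hmax : ∀ s n, ∃ a, Enabled P s a ∧ ∀ b, Enabled P s b →
      ∑ s1, P s b s1 * U n s1 ≤ ∑ s1, P s a s1 * U n s1 := by
    intro s n
    obtain ⟨a, ha, hmax⟩ := Finset.exists_max_image (Finset.univ.filter (Enabled P s))
      (fun a => ∑ s1, P s a s1 * U n s1) (by obtain ⟨a, ha⟩ := hP s; exact ⟨a, by simpa using ha⟩)
    exact ⟨a, by simpa using ha, fun b hb => hmax b (by simpa using hb)⟩
  choose d hd hmax using hmax
  exact ⟨d, hd, hmax⟩

end CDScheduler

section Value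

variable {S A : Type} [Fintype S] [Fintype A] [DecidableEq S] {P : S → A → S → ℝ}
  {σ : List (S × A) × S → A → ℝ} {r : ℕ → S → ℝ}

noncomputable def hrValue (P : S → A → S → ℝ) (r : ℕ → S → ℝ) (σ : List (S × A) × S → A → ℝ)
    (s : S) : ℝ :=
  ∑' i, ∑ s', hrProb P σ s i s' * r i s'

lemma sum_hrProb_mul_nonneg (hP : ∀ s a s', 0 ≤ P s a s') (hσ : IsHR P σ)
    (hr : ∀ i s, 0 ≤ r i s) (s : S) (i : ℕ) : 0 ≤ ∑ s', hrProb P σ s i s' * r i s' :=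
  Finset.sum_nonneg fun s' _ => mul_nonneg (hrProb_nonneg hP hσ i s') (hr i s')

lemma sum_hrProb_mul_le (hP : ∀ s a s', 0 ≤ P s a s') (hσ : IsHR P σ)
    (hr : ∀ i s, 0 ≤ r i s) (s : S) (i : ℕ) : ∑ s', hrProb P σ s i s' * r i s' ≤ ∑ s', r i s' :=
  Finset.sum_le_sum fun s' _ => mul_le_of_le_one_left (hr i s') (hrProb_le_one hP hσ i s')

lemma summable_hrValue (hP : ∀ s a s', 0 ≤ P s a s') (hσ : IsHR P σ)
    (hr : ∀ i s, 0 ≤ r i s) (hrs : Summable fun i => ∑ s, r i s) (s : S) :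
    Summable fun i => ∑ s', hrProb P σ s i s' * r i s' :=
  hrs.of_nonneg_of_le (sum_hrProb_mul_nonneg hP hσ hr s) (sum_hrProb_mul_le hP hσ hr s)

lemma hrValue_nonneg (hP : ∀ s a s', 0 ≤ P s a s') (hσ : IsHR P σ)
    (hr : ∀ i s, 0 ≤ r i s) (s : S) : 0 ≤ hrValue P r σ s :=
  tsum_nonneg (sum_hrProb_mul_nonneg hP hσ hr s)

lemma hrValue_le_tsum (hP : ∀ s a s', 0 ≤ P s a s') (hσ : IsHR P σ)
    (hr : ∀ i s, 0 ≤ r i s) (hrs : Summable fun i => ∑ s, r i s) (s : S) :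
    hrValue P r σ s ≤ ∑' i, ∑ s', r i s' :=
  (summable_hrValue hP hσ hr hrs s).tsum_le_tsum (sum_hrProb_mul_le hP hσ hr s) hrs

lemma hrValue_eq (hP : ∀ s a s', 0 ≤ P s a s') (hσ : IsHR P σ)
    (hr : ∀ i s, 0 ≤ r i s) (hrs : Summable fun i => ∑ s, r i s) (s : S) :
    hrValue P r σ s = r 0 s +
      ∑ a, σ ([], s) a * ∑ s1, P s a s1 * hrValue P (fun i => r (i + 1)) (shiftSch σ s a) s1 := by
  have hshift : ∀ a s1, HasSum
      (fun i => ∑ s', hrProb P (shiftSch σ s a) s1 i s' * r (i + 1) s')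
      (hrValue P (fun i => r (i + 1)) (shiftSch σ s a) s1) := fun a s1 =>
    (summable_hrValue hP (isHR_shiftSch hσ a) (fun i => hr (i + 1))
      ((summable_nat_add_iff (f := fun i => ∑ s, r i s) 1).2 hrs) s1).hasSum
  conv_lhs => rw [hrValue, (summable_hrValue hP hσ hr hrs s).tsum_eq_zero_add]
  congr 1
  · simp [hrProb_zero]
  · have hterm : (fun i => ∑ s', hrProb P σ s (i + 1) s' * r (i + 1) s') = fun i =>
        ∑ a, σ ([], s) a * ∑ s1, P s a s1 *
          ∑ s', hrProb P (shiftSch σ s a) s1 i s' * r (i + 1) s' := by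
      funext i
      simp only [hrProb_succ, Finset.sum_mul, Finset.mul_sum, mul_assoc]
      rw [Finset.sum_comm]
      exact Finset.sum_congr rfl fun a _ => Finset.sum_comm
    rw [hterm]
    exact (hasSum_sum fun a _ => (hasSum_sum fun s1 _ =>
      (hshift a s1).mul_left (P s a s1)).mul_left (σ ([], s) a)).tsum_eq

noncomputable def optValue (P : S → A → S → ℝ) (r : ℕ → S → ℝ) (s : S) : ℝ :=
  ⨆ σ : {σ // IsHR P σ}, hrValue P r σ.1 s

lemma le_optValue (hP : ∀ s a s', 0 ≤ P s a s') (hσ : IsHR P σ)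
    (hr : ∀ i s, 0 ≤ r i s) (hrs : Summable fun i => ∑ s, r i s) (s : S) :
    hrValue P r σ s ≤ optValue P r s :=
  le_ciSup (f := fun τ : {σ // IsHR P σ} => hrValue P r τ.1 s)
    ⟨_, by rintro _ ⟨τ, rfl⟩; exact hrValue_le_tsum hP τ.2 hr hrs s⟩ ⟨σ, hσ⟩

lemma optValue_nonneg (hP : ∀ s a s', 0 ≤ P s a s') (hr : ∀ i s, 0 ≤ r i s) (s : S) :
    0 ≤ optValue P r s :=
  Real.iSup_nonneg fun τ => hrValue_nonneg hP τ.2 hr s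

lemma optValue_le_tsum (hP : ∀ s a s', 0 ≤ P s a s') (hr : ∀ i s, 0 ≤ r i s)
    (hrs : Summable fun i => ∑ s, r i s) (s : S) : optValue P r s ≤ ∑' i, ∑ s', r i s' :=
  Real.iSup_le (fun τ => hrValue_le_tsum hP τ.2 hr hrs s)
    (tsum_nonneg fun i => Finset.sum_nonneg fun s _ => hr i s)

lemma optValue_le_of_forall_le (hP : ∀ s a s', 0 ≤ P s a s') (hr : ∀ i s, 0 ≤ r i s)
    (hrs : Summable fun i => ∑ s, r i s) {s : S} {a : A}
    (ha : ∀ b, Enabled P s b → ∑ s1, P s b s1 * optValue P (fun i => r (i + 1)) s1 ≤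
      ∑ s1, P s a s1 * optValue P (fun i => r (i + 1)) s1) :
    optValue P r s ≤ r 0 s + ∑ s1, P s a s1 * optValue P (fun i => r (i + 1)) s1 := by
  have hr' : ∀ i s, 0 ≤ r (i + 1) s := fun i => hr (i + 1)
  have hrs' := (summable_nat_add_iff (f := fun i => ∑ s, r i s) 1).2 hrs
  refine Real.iSup_le (fun ⟨σ, hσ⟩ => ?_) (add_nonneg (hr 0 s) (Finset.sum_nonneg
    fun s1 _ => mul_nonneg (hP _ _ _) (optValue_nonneg hP hr' s1)))
  rw [hrValue_eq hP hσ hr hrs]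
  gcongr
  calc ∑ b, σ ([], s) b * ∑ s1, P s b s1 * hrValue P _ (shiftSch σ s b) s1
      ≤ ∑ b, σ ([], s) b * ∑ s1, P s a s1 * optValue P (fun i => r (i + 1)) s1 := by
        refine Finset.sum_le_sum fun b _ => ?_
        rcases (hσ.1 ([], s) b).eq_or_lt with h0 | h0
        · rw [← h0, zero_mul, zero_mul]
        · refine mul_le_mul_of_nonneg_left (le_trans ?_ (ha b (hσ.2.2 _ b h0))) h0.le
          exact Finset.sum_le_sum fun s1 _ => mul_le_mul_of_nonneg_left
            (le_optValue hP (isHR_shiftSch hσ b) hr' hrs' s1) (hP _ _ _)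
    _ = ∑ s1, P s a s1 * optValue P (fun i => r (i + 1)) s1 := by
        rw [← Finset.sum_mul, hσ.2.1, one_mul]

variable [DecidableEq A] {d : S → ℕ → A}

lemma hrValue_cdSched (hP : ∀ s a s', 0 ≤ P s a s') (hd : IsCD P d)
    (hr : ∀ i s, 0 ≤ r i s) (hrs : Summable fun i => ∑ s, r i s) (m : ℕ) (s : S) :
    hrValue P r (cdSched d m) s =
      r 0 s + ∑ s1, P s (d s m) s1 * hrValue P (fun i => r (i + 1)) (cdSched d (m + 1)) s1 := by
  rw [hrValue_eq hP (isHR_cdSched hd m) hr hrs]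
  simp only [shiftSch_cdSched]
  simp [cdSched]

end Value

theorem exists_isCD_hrValue_cdSched_eq_optValue {S A : Type} [Fintype S] [Fintype A]
    [DecidableEq S] [DecidableEq A] {P : S → A → S → ℝ} (hP : ∀ s a s', 0 ≤ P s a s')
    (hen : ∀ s, ∃ a, Enabled P s a) {r : ℕ → S → ℝ} (hr : ∀ i s, 0 ≤ r i s)
    (hrs : Summable fun i => ∑ s, r i s) :
    ∃ d : S → ℕ → A, IsCD P d ∧ ∀ s, hrValue P r (cdSched d 0) s = optValue P r s := by
  set U : ℕ → S → ℝ := fun n => optValue P fun i => r (i + n)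
  obtain ⟨d, hd, hgreedy⟩ := exists_isCD_forall_le hen fun n => U (n + 1)
  set W : ℕ → S → ℝ := fun n => hrValue P (fun i => r (i + n)) (cdSched d n)
  have hr' : ∀ n i s, 0 ≤ r (i + n) s := fun n i => hr (i + n)
  have hrs' : ∀ n, Summable fun i => ∑ s, r (i + n) s := fun n =>
    (summable_nat_add_iff (f := fun i => ∑ s, r i s) n).2 hrs
  have hshift : ∀ n, (fun i => r (i + 1 + n)) = fun i => r (i + (n + 1)) := fun n =>
    funext fun i => by rw [add_right_comm, add_assoc]
  have hU : ∀ n s, U n s ≤ r n s + ∑ s1, P s (d s n) s1 * U (n + 1) s1 := by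
    intro n s
    have := optValue_le_of_forall_le hP (hr' n) (hrs' n) (a := d s n) (s := s)
      (by simpa only [hshift] using hgreedy s n)
    simpa only [hshift, zero_add] using this
  have hW : ∀ n s, W n s = r n s + ∑ s1, P s (d s n) s1 * W (n + 1) s1 := by
    intro n s
    simpa only [hshift, zero_add] using hrValue_cdSched hP hd (hr' n) (hrs' n) n s
  have hUW : ∀ n s, U n s ≤ W n s := fun n s => sub_nonpos.1 <|
    nonpos_of_subharmonic_of_le_tendsto_zero (K := fun n s s1 => P s (d s n) s1)
      (fun n s s1 => hP _ _ _) (fun n s => hd s n) (D := fun n s => U n s - W n s)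
      (fun n s => by simp only [mul_sub, Finset.sum_sub_distrib]; linarith [hU n s, hW n s])
      (T := fun n => ∑' i, ∑ s, r (i + n) s)
      (fun n s => by
        linarith [optValue_le_tsum hP (hr' n) (hrs' n) s,
          hrValue_nonneg hP (isHR_cdSched hd n) (hr' n) s])
      (tendsto_sum_nat_add fun i => ∑ s, r i s) n s
  exact ⟨d, hd, fun s =>
    le_antisymm (le_optValue hP (isHR_cdSched hd 0) hr hrs s) (hUW 0 s)⟩

section Uniformisation

variable {S : Type} {q t : ℝ} {c f : S → ℝ}

noncomputable def stageReward (q t : ℝ) (c f : S → ℝ) (i : ℕ) (s : S) : ℝ :=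
  phi (q * t) i * f s + psi (q * t) i * (c s / q)

lemma value_eq_tsum_sum_stageReward [Fintype S] (p : ℕ → S → ℝ) :
    value q t c f p = ∑' i, ∑ s, p i s * stageReward q t c f i s := by
  refine tsum_congr fun i => ?_
  simp only [stageReward, Finset.mul_sum, ← Finset.sum_add_distrib]
  exact Finset.sum_congr rfl fun s _ => by ring

lemma stageReward_nonneg (hq : 0 < q) (ht : 0 ≤ t) (hc : ∀ s, 0 ≤ c s) (hf : ∀ s, 0 ≤ f s)
    (i : ℕ) (s : S) : 0 ≤ stageReward q t c f i s :=
  have hqt : 0 ≤ q * t := mul_nonneg hq.le ht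
  add_nonneg (mul_nonneg (phi_nonneg hqt i) (hf s))
    (mul_nonneg (psi_nonneg hqt i) (div_nonneg (hc s) hq.le))

lemma summable_sum_stageReward [Fintype S] (hq : 0 < q) (ht : 0 ≤ t) :
    Summable fun i => ∑ s, stageReward q t c f i s :=
  summable_sum fun _ _ => ((summable_phi _).mul_right _).add
    ((summable_psi (mul_nonneg hq.le ht)).mul_right _)

end Uniformisation

/-- the supremum of the value over HR schedulers is attained by a
CD scheduler, simultaneously for every initial state. -/
theorem stmt0 {S A : Type} [Fintype S] [Fintype A] [DecidableEq S] [DecidableEq A]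
    (P : S → A → S → ℝ) (hP : IsDTMDP P)
    (q t : ℝ) (hq : 0 < q) (ht : 0 ≤ t)
    (c f : S → ℝ) (hc : ∀ s, 0 ≤ c s) (hf : ∀ s, 0 ≤ f s) :
    ∃ d : S → ℕ → A, IsCD P d ∧ ∀ s0 : S,
      value q t c f (cdProb P d s0) =
        ⨆ sch : {sch : List (S × A) × S → A → ℝ // IsHR P sch},
          value q t c f (hrProb P sch.1 s0) := by
  obtain ⟨d, hd, hopt⟩ := exists_isCD_hrValue_cdSched_eq_optValue hP.1 hP.2.2
    (stageReward_nonneg hq ht hc hf) (summable_sum_stageReward hq ht)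
  refine ⟨d, hd, fun s0 => ?_⟩
  simp only [← hrProb_cdSched, value_eq_tsum_sum_stageReward]
  exact hopt s0

end TR
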